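/- Let Q be a collection of dyadic cubes in Q0 = [0,1]^d with pairwise disjoint interiors, let η > 0, and let Λ be an odd natural number. Then Q can be partitioned into families Q_1, …, Q_{k0} and B such that: (i) every cube of Q is in exactly one of the Q_k or B; (ii) if Q, Q' are distinct cubes in the same family Q_k, then ΛQ ∩ ΛQ' = ∅; and (iii) the H^d-measure of the union of all cubes in B is less than η. The number of families k0 depends only on η, Λ, and d. -/

import Mathlib

open Metric Set MeasureTheory ENNReal

noncomputable section

/-- The `k`-dimensional Hausdorff content of a set in a metric space, defined via
countable covers by closed balls. -/
def hContent {X : Type*} [MetricSpace X] (k : ℕ) (S : Set X) : ℝ≥0∞ :=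
  ⨅ (B : ℕ → Set X) (_ : S ⊆ ⋃ i, B i) (_ : ∀ i, ∃ x r, B i = Metric.closedBall x r),
    ∑' i, EMetric.diam (B i) ^ k

/-- The `k`-dimensional Hausdorff measure of a set in a metric space, defined via
countable covers by closed balls of diameter at most `δ`, letting `δ → 0`. -/
def hMeasure {X : Type*} [MetricSpace X] (k : ℕ) (S : Set X) : ℝ≥0∞ :=
  ⨆ (δ : ℝ≥0∞) (_ : 0 < δ),
    ⨅ (B : ℕ → Set X) (_ : S ⊆ ⋃ i, B i)
      (_ : ∀ i, (∃ x r, B i = Metric.closedBall x r) ∧ EMetric.diam (B i) ≤ δ),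
      ∑' i, EMetric.diam (B i) ^ k

/-- The closed unit cube `[0,1]^d` in `ℝ^d`. -/
def unitCube (d : ℕ) : Set (EuclideanSpace ℝ (Fin d)) :=
  {p | ∀ i, p i ∈ Set.Icc (0 : ℝ) 1}

/-- A dyadic subcube of `[0,1]^d`: it has side length `2⁻ᵏ` and lower-left corner `z/2ᵏ`. -/
structure DyadicCube (d : ℕ) : Type where
  k : ℕ
  z : Fin d → ℕ
  hz : ∀ i, z i + 1 ≤ 2 ^ k

namespace DyadicCube

/-- The side length of a dyadic cube. -/
def side {d : ℕ} (Q : DyadicCube d) : ℝ := (2 : ℝ)⁻¹ ^ Q.k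

/-- The center of a dyadic cube. -/
def center {d : ℕ} (Q : DyadicCube d) (i : Fin d) : ℝ :=
  ((Q.z i : ℝ) + 1 / 2) * (2 : ℝ)⁻¹ ^ Q.k

/-- The dyadic cube as a (closed) subset of `ℝ^d`. -/
def toSet {d : ℕ} (Q : DyadicCube d) : Set (EuclideanSpace ℝ (Fin d)) :=
  {p | ∀ i, |p i - Q.center i| ≤ Q.side / 2}

/-- `Q.scaled λ` is the cube `λQ`, with the same center as `Q` and `λ` times the side length. -/
def scaled {d : ℕ} (Q : DyadicCube d) (lam : ℝ) : Set (EuclideanSpace ℝ (Fin d)) :=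
  {p | ∀ i, |p i - Q.center i| ≤ lam * Q.side / 2}

end DyadicCube

/-- The `(n,m)`-mapping content `H^{n,m}_∞(f, A)`: the infimum of
`∑ H^n_∞(f(Q_i)) side(Q_i)^m` over countable covers of `A` by dyadic cubes of `[0,1]^{n+m}`
with pairwise disjoint interiors. -/
def mContent (n m : ℕ) {X : Type*} [MetricSpace X]
    (f : EuclideanSpace ℝ (Fin (n + m)) → X)
    (A : Set (EuclideanSpace ℝ (Fin (n + m)))) : ℝ≥0∞ :=
  ⨅ (S : Set (DyadicCube (n + m))) (_ : A ⊆ ⋃ Q ∈ S, Q.toSet)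
    (_ : S.Pairwise fun Q Q' => interior Q.toSet ∩ interior Q'.toSet = ∅),
    ∑' Q : S, hContent n (f '' Q.1.toSet) * ENNReal.ofReal (Q.1.side ^ m)

/-- The alternative `(n,m)`-mapping content `Ĥ^{n,m}_∞(f, A)`: the infimum of
`∑ H^n_∞(f(S_i)) diam(S_i)^m` over countable covers of `A` by arbitrary subsets of
`[0,1]^{n+m}`. -/
def altMContent (n m : ℕ) {X : Type*} [MetricSpace X]
    (f : EuclideanSpace ℝ (Fin (n + m)) → X)
    (A : Set (EuclideanSpace ℝ (Fin (n + m)))) : ℝ≥0∞ :=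
  ⨅ (S : ℕ → Set (EuclideanSpace ℝ (Fin (n + m)))) (_ : A ⊆ ⋃ i, S i)
    (_ : ∀ i, S i ⊆ unitCube (n + m)),
    ∑' i, hContent n (f '' S i) * EMetric.diam (S i) ^ m

/-- The first `n` coordinates of a point of `ℝ^{n+m} = ℝ^n × ℝ^m`. -/
def xpart (n m : ℕ) (p : EuclideanSpace ℝ (Fin (n + m))) : EuclideanSpace ℝ (Fin n) :=
  WithLp.toLp 2 (fun i => p (Fin.castAdd m i))

/-- The last `m` coordinates of a point of `ℝ^{n+m} = ℝ^n × ℝ^m`. -/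
def ypart (n m : ℕ) (p : EuclideanSpace ℝ (Fin (n + m))) : EuclideanSpace ℝ (Fin m) :=
  WithLp.toLp 2 (fun j => p (Fin.natAdd n j))

/-- The point `(x, y) ∈ ℝ^{n+m}` built from `x ∈ ℝ^n`, `y ∈ ℝ^m`. -/
def pairup (n m : ℕ) (x : EuclideanSpace ℝ (Fin n)) (y : EuclideanSpace ℝ (Fin m)) :
    EuclideanSpace ℝ (Fin (n + m)) :=
  WithLp.toLp 2 (fun i => (Fin.addCases (fun i₁ => x i₁) (fun j => y j) i : ℝ))

/-- The horizontal slice `E_y = E ∩ (ℝ^n × {y})`. -/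
def cubeSlice (n m : ℕ) (E : Set (EuclideanSpace ℝ (Fin (n + m))))
    (y : EuclideanSpace ℝ (Fin m)) : Set (EuclideanSpace ℝ (Fin (n + m))) :=
  {p ∈ E | ypart n m p = y}

/-- `f` is `C`-bi-Lipschitz on `s`. -/
def BiLipschitzOnWith {α β : Type*} [PseudoMetricSpace α] [PseudoMetricSpace β]
    (C : ℝ) (f : α → β) (s : Set α) : Prop :=
  ∀ x ∈ s, ∀ y ∈ s, C⁻¹ * dist x y ≤ dist (f x) (f y) ∧ dist (f x) (f y) ≤ C * dist x y

/-- `(E, g)` is a Hard Sard pair for `f` with constant `C`: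
(i) `g` is a globally `C`-bi-Lipschitz homeomorphism of `ℝ^{n+m}` (in particular it restricts
to a bi-Lipschitz map on `E`);
(ii) writing `F = f ∘ g⁻¹`, for `(x,y), (x',y') ∈ g(E)` one has `F(x,y) = F(x',y')` iff `x = x'`;
(iii) the map `(x,y) ↦ (F(x,y), y)` is `C`-bi-Lipschitz on `g(E)`, where `X × ℝ^m` carries the
max metric.  Conditions (ii) and (iii) are expressed at points `p = g⁻¹(x,y)`, `q = g⁻¹(x',y')`
of `E`. -/
def IsHardSardPairWith (n m : ℕ) {X : Type*} [MetricSpace X]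
    (f : EuclideanSpace ℝ (Fin (n + m)) → X)
    (E : Set (EuclideanSpace ℝ (Fin (n + m))))
    (g : EuclideanSpace ℝ (Fin (n + m)) → EuclideanSpace ℝ (Fin (n + m)))
    (C : ℝ) : Prop :=
  Function.Surjective g ∧
  BiLipschitzOnWith C g Set.univ ∧
  (∀ p ∈ E, ∀ q ∈ E, (f p = f q ↔ xpart n m (g p) = xpart n m (g q))) ∧
  (∀ p ∈ E, ∀ q ∈ E,
    C⁻¹ * dist (g p) (g q) ≤ dist (f p, ypart n m (g p)) (f q, ypart n m (g q)) ∧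
    dist (f p, ypart n m (g p)) (f q, ypart n m (g q)) ≤ C * dist (g p) (g q))

/-- `E` is a Hard Sard set for `f` with constant `C`. -/
def IsHardSardSetWith (n m : ℕ) {X : Type*} [MetricSpace X]
    (f : EuclideanSpace ℝ (Fin (n + m)) → X)
    (E : Set (EuclideanSpace ℝ (Fin (n + m)))) (C : ℝ) : Prop :=
  ∃ g, IsHardSardPairWith n m f E g C

/-- `sup_{x,y ∈ s} | d(f(x), f(y)) - N(x - y) |`. -/
def mdSup {d : ℕ} {X : Type*} [MetricSpace X] (f : EuclideanSpace ℝ (Fin d) → X)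
    (s : Set (EuclideanSpace ℝ (Fin d))) (N : Seminorm ℝ (EuclideanSpace ℝ (Fin d))) : ℝ :=
  ⨆ x : s, ⨆ y : s, |dist (f x.1) (f y.1) - N (x.1 - y.1)|

/-- `md_f` on a set `s` (a cube of side length `side`):
`side⁻¹ · inf_N sup_{x,y ∈ s} | d(f(x), f(y)) - N(x-y) |`, the infimum being over all
seminorms `N` on `ℝ^d`. -/
def mdf {d : ℕ} {X : Type*} [MetricSpace X] (f : EuclideanSpace ℝ (Fin d) → X)
    (s : Set (EuclideanSpace ℝ (Fin d))) (side : ℝ) : ℝ :=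
  side⁻¹ * ⨅ N : Seminorm ℝ (EuclideanSpace ℝ (Fin d)), mdSup f s N

/-- The coordinate plane spanned by the standard basis vectors `e_i`, `i ∈ s`. -/
def coordPlane {d : ℕ} (s : Finset (Fin d)) : Submodule ℝ (EuclideanSpace ℝ (Fin d)) :=
  Submodule.span ℝ {v | ∃ i ∈ s, v = EuclideanSpace.single i (1 : ℝ)}

/-!
Colour the cubes greedily, larger cubes first, with `m` colours: a cube receives a colour used by
no earlier cube `Q'` with `ΛQ ∩ ΛQ' ≠ ∅`, and is put into `ℬ` when every colour is taken. A cube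
`Q ∈ ℬ` then meets the `Λ`-dilates of `m` distinct cubes at least as large as itself, so it lies in
their `(2Λ+1)`-dilates. Hence `∑_{Q' ∈ 𝒬} 1_{(2Λ+1)Q'}`, whose integral is at most `(2Λ+1)^d`
because the cubes of `𝒬` have disjoint interiors in `[0,1]^d`, is `≥ m` on `⋃ ℬ`, and Markov's
inequality gives `|⋃ ℬ| ≤ (2Λ+1)^d / m`. Covering each cube by many small balls bounds the
Hausdorff measure of a union of cubes by `√d^d` times its volume, and `m` large makes it `< η`.
-/

theorem exists_greedy_coloring {α β ι : Type*} [LinearOrder β] [WellFoundedLT β] (f : α → β)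
    (R : α → α → Prop) :
    ∃ col : α → Option ι, ∀ a,
      (∀ c, col a = some c → ∀ b, f b < f a → R a b → col b ≠ some c) ∧
      (col a = none → ∀ c, ∃ b, f b < f a ∧ R a b ∧ col b = some c) := by
  classical
  let step (a : α) (col : ∀ b, f b < f a → Option ι) : Option ι :=
    if h : ∃ c, ∀ b (hb : f b < f a), R a b → col b hb ≠ some c then some h.choose else none
  refine ⟨(wellFounded_lt.onFun (f := f)).fix step, fun a => ?_⟩
  rw [WellFounded.fix_eq]
  by_cases h : ∃ c, ∀ b (hb : f b < f a), R a b →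
      (wellFounded_lt.onFun (f := f)).fix step b ≠ some c
  · simp only [step, dif_pos h, Option.some.injEq, reduceCtorEq, false_imp_iff, and_true]
    rintro c rfl
    exact h.choose_spec
  · simp only [step, dif_neg h, reduceCtorEq, false_imp_iff, implies_true, true_and]
    push Not at h
    exact fun _ => h

section CoordBox

variable {d : ℕ}

def coordBox (c : Fin d → ℝ) (r : ℝ) : Set (EuclideanSpace ℝ (Fin d)) :=
  {p | ∀ i, |p i - c i| ≤ r}

lemma coordBox_eq_preimage (c : Fin d → ℝ) (r : ℝ) :
    coordBox c r = WithLp.ofLp ⁻¹' univ.pi fun i => Icc (c i - r) (c i + r) := by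
  ext p
  simp only [coordBox, mem_ofPred_eq, mem_preimage, mem_univ_pi, mem_Icc, abs_le]
  refine forall_congr' fun i => ?_
  constructor <;> rintro ⟨h₁, h₂⟩ <;> constructor <;> linarith

lemma volume_preimage_ofLp_pi {s : Fin d → Set ℝ} (hs : ∀ i, MeasurableSet (s i)) :
    volume (WithLp.ofLp ⁻¹' univ.pi s : Set (EuclideanSpace ℝ (Fin d))) = ∏ i, volume (s i) := by
  rw [(PiLp.volume_preserving_ofLp (Fin d)).measure_preimage
    (MeasurableSet.univ_pi hs).nullMeasurableSet, volume_pi_pi]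

lemma measurableSet_coordBox (c : Fin d → ℝ) (r : ℝ) : MeasurableSet (coordBox c r) := by
  rw [coordBox_eq_preimage]
  exact (MeasurableSet.univ_pi fun _ => measurableSet_Icc).preimage (WithLp.measurable_ofLp _ _)

lemma volume_coordBox (c : Fin d → ℝ) {r : ℝ} (hr : 0 ≤ r) :
    volume (coordBox c r) = ENNReal.ofReal ((2 * r) ^ d) := by
  rw [coordBox_eq_preimage, volume_preimage_ofLp_pi fun _ => measurableSet_Icc]
  simp only [Real.volume_Icc, show ∀ i, c i + r - (c i - r) = 2 * r from fun _ => by ring,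
    Finset.prod_const, Finset.card_univ, Fintype.card_fin,
    ENNReal.ofReal_pow (by linarith : 0 ≤ 2 * r)]

lemma volume_interior_coordBox (c : Fin d → ℝ) (r : ℝ) :
    volume (interior (coordBox c r)) = volume (coordBox c r) := by
  refine le_antisymm (measure_mono interior_subset) ?_
  have hopen : WithLp.ofLp ⁻¹' univ.pi (fun i => Ioo (c i - r) (c i + r)) ⊆
      interior (coordBox c r) := by
    rw [coordBox_eq_preimage]
    refine (preimage_mono ?_).trans
      (preimage_interior_subset_interior_preimage (PiLp.continuous_ofLp _ _))
    rw [interior_pi_set finite_univ]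
    simp
  calc volume (coordBox c r) = ∏ i, volume (Icc (c i - r) (c i + r)) := by
        rw [coordBox_eq_preimage, volume_preimage_ofLp_pi fun _ => measurableSet_Icc]
    _ = ∏ i, volume (Ioo (c i - r) (c i + r)) := by simp_rw [Real.volume_Icc, Real.volume_Ioo]
    _ = volume (WithLp.ofLp ⁻¹' univ.pi fun i => Ioo (c i - r) (c i + r)) :=
        (volume_preimage_ofLp_pi fun _ => measurableSet_Ioo).symm
    _ ≤ volume (interior (coordBox c r)) := measure_mono hopen

end CoordBox

section BallCovers

variable {X : Type*} [MetricSpace X]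

def HasFineBallCovers (k : ℕ) (S : Set X) (a : ℝ≥0∞) : Prop :=
  ∀ δ > 0, ∃ 𝓑 : Set (Set X), 𝓑.Countable ∧ S ⊆ ⋃₀ 𝓑 ∧
    (∀ b ∈ 𝓑, (∃ x r, b = closedBall x r) ∧ ediam b ≤ δ) ∧ ∑' b : 𝓑, ediam (b : Set X) ^ k ≤ a

lemma HasFineBallCovers.hMeasure_le [Nonempty X] {k : ℕ} (hk : k ≠ 0) {S : Set X} {a : ℝ≥0∞}
    (h : HasFineBallCovers k S a) : hMeasure k S ≤ a := by
  refine iSup₂_le fun δ hδ => ?_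
  obtain ⟨𝓑, h𝓑, hS, hball, hsum⟩ := h δ hδ
  have := h𝓑.to_subtype
  obtain ⟨e, he⟩ := exists_injective_nat 𝓑
  -- enumerate `𝓑` injectively, padding with empty sets (which are degenerate closed balls)
  set B : ℕ → Set X := Function.extend e Subtype.val fun _ => ∅
  have hB : ∀ b : 𝓑, B (e b) = b := he.extend_apply _ _
  have hB' : ∀ n, n ∉ range e → B n = ∅ := fun n hn => Function.extend_apply' _ _ _ hn
  refine iInf_le_of_le B (iInf_le_of_le ?_ (iInf_le_of_le ?_ ?_))
  · intro x hx
    obtain ⟨b, hb, hxb⟩ := mem_sUnion.1 (hS hx)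
    exact mem_iUnion.2 ⟨e ⟨b, hb⟩, by rwa [hB]⟩
  · intro n
    by_cases hn : n ∈ range e
    · obtain ⟨b, rfl⟩ := hn
      rw [hB]
      exact hball b b.2
    · obtain ⟨x⟩ := ‹Nonempty X›
      rw [hB' n hn]
      exact ⟨⟨x, -1, (closedBall_eq_empty.2 (by norm_num)).symm⟩, ediam_empty.trans_le zero_le⟩
  · calc ∑' n, ediam (B n) ^ k
        = ∑' n, Function.extend e (fun b : 𝓑 => ediam (b : Set X) ^ k) 0 n := by
          refine tsum_congr fun n => ?_
          rw [Function.apply_extend (fun s => ediam s ^ k)]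
          congr 1
          ext
          simp [ediam_empty, zero_pow hk]
      _ = ∑' b : 𝓑, ediam (b : Set X) ^ k := tsum_extend_zero he _
      _ ≤ a := hsum

lemma HasFineBallCovers.biUnion {ι : Type*} {k : ℕ} {s : Set ι} (hs : s.Countable)
    {S : ι → Set X} {a : ι → ℝ≥0∞} (h : ∀ i ∈ s, HasFineBallCovers k (S i) (a i)) :
    HasFineBallCovers k (⋃ i ∈ s, S i) (∑' i : s, a i) := by
  intro δ hδ
  choose 𝓑 h𝓑 hS hball hsum using fun i : s => h i i.2 δ hδ
  have := hs.to_subtype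
  refine ⟨⋃ i, 𝓑 i, countable_iUnion h𝓑, ?_, ?_, ?_⟩
  · intro x hx
    obtain ⟨i, hi, hxi⟩ := mem_iUnion₂.1 hx
    obtain ⟨b, hb, hxb⟩ := mem_sUnion.1 (hS ⟨i, hi⟩ hxi)
    exact mem_sUnion.2 ⟨b, mem_iUnion.2 ⟨_, hb⟩, hxb⟩
  · intro b hb
    obtain ⟨i, hbi⟩ := mem_iUnion.1 hb
    exact hball i b hbi
  · exact (ENNReal.tsum_iUnion_le_tsum (fun b => ediam b ^ k) _).trans
      (ENNReal.tsum_le_tsum hsum)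

end BallCovers

lemma exists_fin_abs_sub_grid_le {a h t : ℝ} (hh : 0 < h) {n : ℕ} (hn : 0 < n) (ha : a ≤ t)
    (hb : t ≤ a + 2 * n * h) : ∃ j : Fin n, |t - (a + (2 * j + 1) * h)| ≤ h := by
  set u := (t - a) / (2 * h)
  have hu₀ : 0 ≤ u := div_nonneg (by linarith) (by positivity)
  have hun : u ≤ n := (div_le_iff₀ (by positivity)).2 (by linarith)
  obtain ⟨j, hjn, hju, huj⟩ : ∃ j : ℕ, j < n ∧ (j : ℝ) ≤ u ∧ u ≤ j + 1 := by
    by_cases hfl : ⌊u⌋₊ < n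
    · exact ⟨⌊u⌋₊, hfl, Nat.floor_le hu₀, (Nat.lt_floor_add_one u).le⟩
    · have : (n : ℝ) ≤ ⌊u⌋₊ := by exact_mod_cast not_lt.1 hfl
      refine ⟨n - 1, by omega, ?_, ?_⟩ <;> push_cast [Nat.one_le_iff_ne_zero.2 hn.ne'] <;>
        linarith [Nat.floor_le hu₀]
  rw [le_div_iff₀ (by positivity)] at hju
  rw [div_le_iff₀ (by positivity)] at huj
  exact ⟨⟨j, hjn⟩, abs_le.2 ⟨by simp only; linarith, by simp only; linarith⟩⟩

lemma EuclideanSpace.dist_le_sqrt_card_mul {ι : Type*} [Fintype ι] {x y : EuclideanSpace ℝ ι}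
    {ε : ℝ} (hε : 0 ≤ ε) (h : ∀ i, |x i - y i| ≤ ε) : dist x y ≤ √(Fintype.card ι) * ε := by
  rw [EuclideanSpace.dist_eq, ← Real.sqrt_sq hε, ← Real.sqrt_mul (Nat.cast_nonneg _)]
  refine Real.sqrt_le_sqrt ?_
  calc ∑ i, dist (x i) (y i) ^ 2 ≤ ∑ _i : ι, ε ^ 2 :=
        Finset.sum_le_sum fun i _ => pow_le_pow_left₀ dist_nonneg (h i) 2
    _ = Fintype.card ι * ε ^ 2 := by simp

lemma coordBox_subset_iUnion_closedBall {d : ℕ} (c : Fin d → ℝ) {r : ℝ} (hr : 0 < r) {n : ℕ}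
    (hn : 0 < n) : coordBox c r ⊆ ⋃ g : Fin d → Fin n,
      closedBall (WithLp.toLp 2 fun i => c i - r + (2 * g i + 1) * (r / n)) (√d * (r / n)) := by
  intro p hp
  have hrn : 0 < r / n := by positivity
  have hnr : 2 * n * (r / n) = 2 * r := by field_simp
  choose j hj using fun i => exists_fin_abs_sub_grid_le (t := p i) (a := c i - r) hrn hn
    (by linarith [(abs_le.1 (hp i)).1]) (by rw [hnr]; linarith [(abs_le.1 (hp i)).2])
  refine mem_iUnion.2 ⟨j, mem_closedBall.2 ?_⟩
  simpa using EuclideanSpace.dist_le_sqrt_card_mul (x := p)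
    (y := WithLp.toLp 2 fun i => c i - r + (2 * j i + 1) * (r / n)) hrn.le hj

lemma hasFineBallCovers_coordBox {d : ℕ} (c : Fin d → ℝ) {r : ℝ} (hr : 0 < r) :
    HasFineBallCovers d (coordBox c r) (ENNReal.ofReal ((√d * (2 * r)) ^ d)) := by
  intro δ hδ
  obtain ⟨n, hn, hδn⟩ : ∃ n : ℕ, 0 < n ∧ ENNReal.ofReal (2 * (√d * (r / n))) < δ := by
    have hlim := ENNReal.tendsto_ofReal
      (((tendsto_const_div_atTop_nhds_zero_nat r).const_mul √d).const_mul 2)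
    rw [mul_zero, mul_zero, ENNReal.ofReal_zero] at hlim
    exact ((Filter.eventually_gt_atTop 0).and (hlim.eventually (gt_mem_nhds hδ))).exists
  set ball : (Fin d → Fin n) → Set (EuclideanSpace ℝ (Fin d)) := fun g =>
    closedBall (WithLp.toLp 2 fun i => c i - r + (2 * g i + 1) * (r / n)) (√d * (r / n))
  have hdiam (g : Fin d → Fin n) : ediam (ball g) ≤ ENNReal.ofReal (2 * (√d * (r / n))) :=
    ediam_le_of_forall_dist_le fun x hx y hy => (dist_triangle_right x y _).trans
      ((add_le_add hx hy).trans_eq (two_mul _).symm)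
  refine ⟨range ball, countable_range _, ?_, ?_, ?_⟩
  · simpa only [sUnion_range] using coordBox_subset_iUnion_closedBall c hr hn
  · rintro _ ⟨g, rfl⟩
    exact ⟨⟨_, _, rfl⟩, (hdiam g).trans hδn.le⟩
  · calc ∑' b : range ball, ediam (b : Set (EuclideanSpace ℝ (Fin d))) ^ d
        ≤ ∑' g, ediam (ball g) ^ d :=
          ENNReal.tsum_le_tsum_comp_of_surjective (rangeFactorization_surjective (f := ball))
            fun b => ediam b.1 ^ d
      _ ≤ ∑' _ : Fin d → Fin n, ENNReal.ofReal (2 * (√d * (r / n))) ^ d := by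
          gcongr with g
          exact hdiam g
      _ = ENNReal.ofReal ((√d * (2 * r)) ^ d) := by
          rw [tsum_fintype, Finset.sum_const, Finset.card_univ, Fintype.card_fun,
            Fintype.card_fin, Fintype.card_fin, nsmul_eq_mul, ← ENNReal.ofReal_natCast,
            ← ENNReal.ofReal_pow (by positivity), ← ENNReal.ofReal_mul (by positivity),
            Nat.cast_pow, ← mul_pow]
          congr 2
          field_simp

namespace DyadicCube

variable {d : ℕ}

instance : Countable (DyadicCube d) := by
  refine Function.Injective.countable (f := fun Q : DyadicCube d => (Q.k, Q.z)) ?_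
  rintro ⟨k, z, _⟩ ⟨k', z', _⟩ h
  obtain ⟨rfl, rfl⟩ := Prod.mk.inj h
  rfl

lemma side_pos (Q : DyadicCube d) : 0 < Q.side := by
  unfold side
  positivity

lemma side_le_side {Q Q' : DyadicCube d} (h : Q'.k ≤ Q.k) : Q.side ≤ Q'.side :=
  pow_le_pow_of_le_one (by norm_num) (by norm_num) h

lemma toSet_eq_coordBox (Q : DyadicCube d) : Q.toSet = coordBox Q.center (Q.side / 2) := rfl

lemma scaled_eq_coordBox (Q : DyadicCube d) (L : ℝ) :
    Q.scaled L = coordBox Q.center (L * Q.side / 2) := rfl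

lemma volume_interior_toSet (Q : DyadicCube d) :
    volume (interior Q.toSet) = ENNReal.ofReal (Q.side ^ d) := by
  rw [toSet_eq_coordBox, volume_interior_coordBox, volume_coordBox _ (half_pos Q.side_pos).le,
    mul_div_cancel₀ _ two_ne_zero]

lemma volume_scaled (Q : DyadicCube d) {L : ℝ} (hL : 0 ≤ L) :
    volume (Q.scaled L) = ENNReal.ofReal ((L * Q.side) ^ d) := by
  rw [scaled_eq_coordBox, volume_coordBox _ (by have := Q.side_pos; positivity),
    mul_div_cancel₀ _ two_ne_zero]

lemma measurableSet_scaled (Q : DyadicCube d) (L : ℝ) : MeasurableSet (Q.scaled L) :=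
  measurableSet_coordBox _ _

lemma toSet_subset_unitCube (Q : DyadicCube d) : Q.toSet ⊆ unitCube d := by
  intro p hp i
  have hz : ((Q.z i : ℝ) + 1) * Q.side ≤ 1 := by
    have : (Q.z i : ℝ) + 1 ≤ 2 ^ Q.k := by exact_mod_cast Q.hz i
    calc ((Q.z i : ℝ) + 1) * Q.side ≤ 2 ^ Q.k * Q.side := by gcongr; exact Q.side_pos.le
      _ = 1 := by simp [side]
  have hc : Q.center i = (Q.z i + 1 / 2) * Q.side := rfl
  have hp' := abs_le.1 (hp i)
  rw [hc] at hp'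
  have := Q.side_pos
  constructor <;> nlinarith [(Q.z i).cast_nonneg (α := ℝ)]

lemma toSet_subset_scaled_of_inter {Q Q' : DyadicCube d} (hk : Q'.k ≤ Q.k) {L : ℝ}
    (h : (Q.scaled L ∩ Q'.scaled L).Nonempty) : Q.toSet ⊆ Q'.scaled (2 * L + 1) := by
  obtain ⟨x, hx, hx'⟩ := h
  intro p hp i
  have hside := side_le_side hk
  have := Q.side_pos
  have h₁ := abs_le.1 (hp i)
  have h₂ := abs_le.1 (hx i)
  have h₃ := abs_le.1 (hx' i)
  rw [abs_le]
  constructor <;> nlinarith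

end DyadicCube

lemma volume_unitCube (d : ℕ) : volume (unitCube d) = 1 := by
  have : unitCube d = WithLp.ofLp ⁻¹' univ.pi fun _ => Icc (0 : ℝ) 1 := by
    ext p
    simp only [unitCube, mem_ofPred_eq, mem_preimage, mem_univ_pi]
  rw [this, volume_preimage_ofLp_pi fun _ => measurableSet_Icc]
  simp

section Packing

variable {d : ℕ}

lemma tsum_side_pow_eq_volume_iUnion_interior {𝒬 : Set (DyadicCube d)}
    (h𝒬 : 𝒬.Pairwise fun Q Q' => interior Q.toSet ∩ interior Q'.toSet = ∅) :
    ∑' Q : 𝒬, ENNReal.ofReal (Q.1.side ^ d) = volume (⋃ Q : 𝒬, interior Q.1.toSet) := by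
  rw [measure_iUnion (fun Q Q' hne => disjoint_iff_inter_eq_empty.2
    (h𝒬 Q.2 Q'.2 (Subtype.coe_ne_coe.2 hne))) fun _ => isOpen_interior.measurableSet]
  simp_rw [DyadicCube.volume_interior_toSet]

lemma tsum_side_pow_le_one {𝒬 : Set (DyadicCube d)}
    (h𝒬 : 𝒬.Pairwise fun Q Q' => interior Q.toSet ∩ interior Q'.toSet = ∅) :
    ∑' Q : 𝒬, ENNReal.ofReal (Q.1.side ^ d) ≤ 1 := by
  rw [tsum_side_pow_eq_volume_iUnion_interior h𝒬, ← volume_unitCube d]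
  exact measure_mono (iUnion_subset fun Q => interior_subset.trans Q.1.toSet_subset_unitCube)

lemma lintegral_tsum_indicator_scaled_le {𝒬 : Set (DyadicCube d)}
    (h𝒬 : 𝒬.Pairwise fun Q Q' => interior Q.toSet ∩ interior Q'.toSet = ∅) {L : ℝ} (hL : 0 ≤ L) :
    ∫⁻ x, ∑' Q : 𝒬, (Q.1.scaled L).indicator 1 x ≤ ENNReal.ofReal (L ^ d) := by
  rw [lintegral_tsum fun Q =>
    (measurable_one.indicator (DyadicCube.measurableSet_scaled _ _)).aemeasurable]
  simp_rw [lintegral_indicator_one (DyadicCube.measurableSet_scaled _ _),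
    DyadicCube.volume_scaled _ hL, mul_pow, ENNReal.ofReal_mul (pow_nonneg hL d),
    ENNReal.tsum_mul_left]
  calc ENNReal.ofReal (L ^ d) * ∑' Q : 𝒬, ENNReal.ofReal (Q.1.side ^ d)
      ≤ ENNReal.ofReal (L ^ d) * 1 := by gcongr; exact tsum_side_pow_le_one h𝒬
    _ = ENNReal.ofReal (L ^ d) := mul_one _

lemma natCast_mul_tsum_side_pow_le {𝒬 ℬ : Set (DyadicCube d)}
    (h𝒬 : 𝒬.Pairwise fun Q Q' => interior Q.toSet ∩ interior Q'.toSet = ∅) (hℬ : ℬ ⊆ 𝒬)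
    {L : ℝ} (hL : 0 ≤ L) {m : ℕ}
    (hcov : ∀ Q ∈ ℬ, ∃ F : Fin m → 𝒬, Function.Injective F ∧ ∀ c, Q.toSet ⊆ (F c).1.scaled L) :
    m * ∑' Q : ℬ, ENNReal.ofReal (Q.1.side ^ d) ≤ ENNReal.ofReal (L ^ d) := by
  set g : EuclideanSpace ℝ (Fin d) → ℝ≥0∞ := fun x => ∑' Q : 𝒬, (Q.1.scaled L).indicator 1 x
  have hg : Measurable g :=
    Measurable.tsum fun Q => measurable_one.indicator (DyadicCube.measurableSet_scaled _ _)
  have hℬg : (⋃ Q : ℬ, interior Q.1.toSet) ⊆ {x | (m : ℝ≥0∞) ≤ g x} := by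
    intro x hx
    obtain ⟨Q, hxQ⟩ := mem_iUnion.1 hx
    obtain ⟨F, hF, hQF⟩ := hcov Q Q.2
    calc (m : ℝ≥0∞) = ∑' c : Fin m, ((F c).1.scaled L).indicator 1 x := by
          simp [indicator_of_mem (hQF _ (interior_subset hxQ))]
      _ ≤ g x := ENNReal.tsum_comp_le_tsum_of_injective hF fun Q => (Q.1.scaled L).indicator 1 x
  calc (m : ℝ≥0∞) * ∑' Q : ℬ, ENNReal.ofReal (Q.1.side ^ d)
      = m * volume (⋃ Q : ℬ, interior Q.1.toSet) := by
        rw [tsum_side_pow_eq_volume_iUnion_interior (h𝒬.mono hℬ)]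
    _ ≤ m * volume {x | (m : ℝ≥0∞) ≤ g x} := by gcongr
    _ ≤ ∫⁻ x, g x := mul_meas_ge_le_lintegral₀ hg.aemeasurable _
    _ ≤ ENNReal.ofReal (L ^ d) := lintegral_tsum_indicator_scaled_le h𝒬 hL

end Packing

lemma hMeasure_biUnion_toSet_le {d : ℕ} (hd : d ≠ 0) (ℬ : Set (DyadicCube d)) :
    hMeasure d (⋃ Q ∈ ℬ, Q.toSet) ≤
      ENNReal.ofReal (√d ^ d) * ∑' Q : ℬ, ENNReal.ofReal (Q.1.side ^ d) := by
  have hcov := HasFineBallCovers.biUnion ℬ.to_countable fun Q _ =>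
    hasFineBallCovers_coordBox Q.center (half_pos Q.side_pos)
  refine (hcov.hMeasure_le hd).trans_eq ?_
  rw [← ENNReal.tsum_mul_left]
  refine tsum_congr fun Q => ?_
  rw [← ENNReal.ofReal_mul (by positivity), ← mul_pow, mul_div_cancel₀ _ two_ne_zero]

lemma natCast_mul_hMeasure_biUnion_le {d : ℕ} (hd : d ≠ 0) {𝒬 ℬ : Set (DyadicCube d)}
    (h𝒬 : 𝒬.Pairwise fun Q Q' => interior Q.toSet ∩ interior Q'.toSet = ∅) (hℬ : ℬ ⊆ 𝒬)
    {L : ℝ} (hL : 0 ≤ L) {m : ℕ}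
    (hcov : ∀ Q ∈ ℬ, ∃ F : Fin m → 𝒬, Function.Injective F ∧ ∀ c, Q.toSet ⊆ (F c).1.scaled L) :
    m * hMeasure d (⋃ Q ∈ ℬ, Q.toSet) ≤ ENNReal.ofReal ((√d * L) ^ d) := by
  calc (m : ℝ≥0∞) * hMeasure d (⋃ Q ∈ ℬ, Q.toSet)
      ≤ m * (ENNReal.ofReal (√d ^ d) * ∑' Q : ℬ, ENNReal.ofReal (Q.1.side ^ d)) := by
        gcongr; exact hMeasure_biUnion_toSet_le hd ℬ
    _ = ENNReal.ofReal (√d ^ d) * (m * ∑' Q : ℬ, ENNReal.ofReal (Q.1.side ^ d)) := by ring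
    _ ≤ ENNReal.ofReal (√d ^ d) * ENNReal.ofReal (L ^ d) := by
        gcongr; exact natCast_mul_tsum_side_pow_le h𝒬 hℬ hL hcov
    _ = ENNReal.ofReal ((√d * L) ^ d) := by rw [← ENNReal.ofReal_mul (by positivity), mul_pow]

lemma exists_greedy_coloring_dyadicCube {d : ℕ} (𝒬 : Set (DyadicCube d)) (L : ℝ) (m : ℕ) :
    ∃ col : DyadicCube d → Option (Fin m),
      (∀ Q ∈ 𝒬, ∀ Q' ∈ 𝒬, Q ≠ Q' → col Q = col Q' → col Q ≠ none →
        Q.scaled L ∩ Q'.scaled L = ∅) ∧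
      (∀ Q, col Q = none →
        ∃ F : Fin m → 𝒬, Function.Injective F ∧ ∀ c, Q.toSet ⊆ (F c).1.scaled (2 * L + 1)) := by
  obtain ⟨e, he⟩ := exists_injective_nat (DyadicCube d)
  -- larger cubes come first; ties between cubes of the same size are broken by `e`
  let rank (Q : DyadicCube d) : ℕ ×ₗ ℕ := toLex (Q.k, e Q)
  obtain ⟨col, hcol⟩ := exists_greedy_coloring (ι := Fin m) rank
    fun Q Q' => Q' ∈ 𝒬 ∧ (Q.scaled L ∩ Q'.scaled L).Nonempty
  refine ⟨col, fun Q hQ Q' hQ' hne hcol_eq hsome => ?_, fun Q hnone => ?_⟩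
  · obtain ⟨c, hc⟩ := Option.ne_none_iff_exists'.1 hsome
    rw [← not_nonempty_iff_eq_empty]
    intro hconf
    rcases lt_or_gt_of_ne (fun h : rank Q = rank Q' => hne (he (Prod.ext_iff.1 h).2)) with h | h
    · exact (hcol Q').1 c (hcol_eq ▸ hc) Q h ⟨hQ, by rwa [inter_comm]⟩ hc
    · exact (hcol Q).1 c hc Q' h ⟨hQ', hconf⟩ (hcol_eq ▸ hc)
  · choose F hrank hF hcolF using (hcol Q).2 hnone
    refine ⟨fun c => ⟨F c, (hF c).1⟩, fun c c' h => ?_, fun c =>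
      DyadicCube.toSet_subset_scaled_of_inter (Prod.Lex.toLex_lt_toLex'.1 (hrank c)).1 (hF c).2⟩
    simpa [hcolF] using congrArg col (congrArg Subtype.val h)

theorem splitting_lemma_general (d : ℕ) (hd : 1 ≤ d) (η : ℝ) (hη : 0 < η) (Λ : ℕ) :
    ∃ k₀ : ℕ,
      ∀ 𝒬 : Set (DyadicCube d),
        (𝒬.Pairwise fun Q Q' => interior Q.toSet ∩ interior Q'.toSet = ∅) →
        ∃ σ : DyadicCube d → Fin (k₀ + 1),
          (∀ Q ∈ 𝒬, ∀ Q' ∈ 𝒬, Q ≠ Q' → σ Q = σ Q' → (σ Q : ℕ) < k₀ →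
            Q.scaled (Λ : ℝ) ∩ Q'.scaled (Λ : ℝ) = ∅) ∧
          hMeasure d (⋃ Q ∈ {Q ∈ 𝒬 | (σ Q : ℕ) = k₀}, Q.toSet) < ENNReal.ofReal η := by
  obtain ⟨m, hm⟩ := exists_nat_gt ((√d * (2 * Λ + 1)) ^ d / η)
  have hm₀ : 0 < m := by exact_mod_cast (div_nonneg (by positivity) hη.le).trans_lt hm
  refine ⟨m, fun 𝒬 h𝒬 => ?_⟩
  obtain ⟨col, hsep, hbad⟩ := exists_greedy_coloring_dyadicCube 𝒬 Λ m
  -- the family of `Q` is `col Q`, with `none` (the value `m`) standing for `ℬ`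
  have hlast (Q : DyadicCube d) :
      ((finSuccEquivLast.symm (col Q) : Fin (m + 1)) : ℕ) = m ↔ col Q = none := by
    rw [← finSuccEquivLast.symm.injective.eq_iff, finSuccEquivLast_symm_none, Fin.ext_iff,
      Fin.val_last]
  refine ⟨fun Q => finSuccEquivLast.symm (col Q), fun Q hQ Q' hQ' hne hσ hlt =>
    hsep Q hQ Q' hQ' hne (finSuccEquivLast.symm.injective hσ) fun h => hlt.ne ((hlast Q).2 h), ?_⟩
  have hmeas := natCast_mul_hMeasure_biUnion_le (by omega) h𝒬 (sep_subset _ _) (by positivity)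
    fun Q hQ => hbad Q ((hlast Q).1 hQ.2)
  rw [← ENNReal.mul_lt_mul_iff_right (by exact_mod_cast hm₀.ne') (ENNReal.natCast_ne_top m)]
  refine hmeas.trans_lt ?_
  rw [← ENNReal.ofReal_natCast, ← ENNReal.ofReal_mul (by positivity),
    ENNReal.ofReal_lt_ofReal_iff (by positivity)]
  rwa [div_lt_iff₀ hη] at hm

/-- **Splitting lemma.**  Let `𝒬` be a collection of dyadic cubes in `[0,1]^d` with pairwise
disjoint interiors, `η > 0`, and `Λ` an odd natural number.  Then `𝒬` can be partitioned into
families `𝒬_1, …, 𝒬_{k₀}` and `ℬ` (encoded by an assignment `σ` into `Fin (k₀+1)`, the last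
value marking `ℬ`) such that distinct cubes in the same family `𝒬_j` have `ΛQ ∩ ΛQ' = ∅`, and
the `H^d`-measure of the union of the cubes of `ℬ` is `< η`.  The number `k₀` depends only on
`η`, `Λ`, `d`. -/
theorem splitting_lemma (d : ℕ) (hd : 1 ≤ d) (η : ℝ) (hη : 0 < η) (Λ : ℕ) (hΛ : Odd Λ) :
    ∃ k₀ : ℕ,
      ∀ 𝒬 : Set (DyadicCube d),
        (𝒬.Pairwise fun Q Q' => interior Q.toSet ∩ interior Q'.toSet = ∅) →
        ∃ σ : DyadicCube d → Fin (k₀ + 1),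
          (∀ Q ∈ 𝒬, ∀ Q' ∈ 𝒬, Q ≠ Q' → σ Q = σ Q' → (σ Q : ℕ) < k₀ →
            Q.scaled (Λ : ℝ) ∩ Q'.scaled (Λ : ℝ) = ∅) ∧
          hMeasure d (⋃ Q ∈ {Q ∈ 𝒬 | (σ Q : ℕ) = k₀}, Q.toSet) < ENNReal.ofReal η :=
  splitting_lemma_general d hd η hη Λ
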